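/- arXiv:1906.09613 — 4 statements merged into one kernel-verified Lean document; each statement's English description precedes it below -/
import Mathlib

section
/- Let f, g : [0,1]^K → ℝ with f being L_f-Lipschitz (with respect to the Euclidean norm), and suppose there exists y ∈ [0,1]^K with g(y) ≤ 0. For G > 0 define h(x) = f(x) + G·max(0, g(x)). Then for every x' ∈ [0,1]^K and α > 0 with h(x') ≤ min_{x ∈ [0,1]^K} h(x) + α, we have (1) f(x') ≤ min_{x ∈ [0,1]^K : g(x) ≤ 0} f(x) + α, and (2) g(x') ≤ (α + L_f·√K)/G. -/
/-!
The near-minimizer `x'` of `h = f + G·max(0, g)` pays at most `h x' - f x'` in penalty. Comparing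
with a feasible point `y`, where the penalty vanishes, this is at most `f y - f x' + α`, and the
Lipschitz bound over the cube, whose diameter is `√K`, bounds `f y - f x'` by `L_f·√K`.
-/

open Set

section Penalty

variable {E : Type*} {f g : E → ℝ} {G α : ℝ} {x' y : E}

theorem le_add_of_penalized_le (hG : 0 ≤ G)
    (hopt : f x' + G * max 0 (g x') ≤ f y + G * max 0 (g y) + α) (hy : g y ≤ 0) :
    f x' ≤ f y + α := by
  rw [max_eq_left hy] at hopt
  nlinarith [le_max_left 0 (g x')]

theorem le_div_of_penalized_le (hG : 0 < G)
    (hopt : f x' + G * max 0 (g x') ≤ f y + G * max 0 (g y) + α) (hy : g y ≤ 0)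
    {C : ℝ} (hC : f y - f x' ≤ C) :
    g x' ≤ (α + C) / G := by
  rw [max_eq_left hy, mul_zero, add_zero] at hopt
  calc g x' ≤ max 0 (g x') := le_max_right _ _
    _ ≤ (α + C) / G := by rw [le_div_iff₀' hG]; linarith

end Penalty

section UnitCube

variable {ι : Type*} [Fintype ι]

def unitCube (ι : Type*) : Set (EuclideanSpace ℝ ι) := {x | ∀ i, x i ∈ Icc (0 : ℝ) 1}

theorem norm_sub_le_sqrt_card_of_mem_unitCube {x y : EuclideanSpace ℝ ι}
    (hx : x ∈ unitCube ι) (hy : y ∈ unitCube ι) : ‖x - y‖ ≤ √(Fintype.card ι) := by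
  rw [EuclideanSpace.norm_eq]
  refine Real.sqrt_le_sqrt ?_
  calc ∑ i, ‖(x - y) i‖ ^ 2 ≤ ∑ _i : ι, (1 : ℝ) := by
        refine Finset.sum_le_sum fun i _ => ?_
        obtain ⟨hx0, hx1⟩ := hx i
        obtain ⟨hy0, hy1⟩ := hy i
        rw [PiLp.sub_apply, Real.norm_eq_abs, sq_abs]
        nlinarith
    _ = Fintype.card ι := by simp

theorem norm_sub_zero_one_eq_sqrt_card :
    ‖(0 : EuclideanSpace ℝ ι) - WithLp.toLp 2 (fun _ => 1)‖ = √(Fintype.card ι) := by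
  simp [EuclideanSpace.norm_eq]

/-- The bound holds also when `L < 0`: the hypothesis at two opposite corners then forces
the cube to be a point. -/
theorem mul_norm_sub_le_mul_sqrt_card {f : EuclideanSpace ℝ ι → ℝ} {L : ℝ}
    (hLip : ∀ x ∈ unitCube ι, ∀ y ∈ unitCube ι, |f x - f y| ≤ L * ‖x - y‖)
    {x y : EuclideanSpace ℝ ι} (hx : x ∈ unitCube ι) (hy : y ∈ unitCube ι) :
    L * ‖x - y‖ ≤ L * √(Fintype.card ι) := by
  have hcorners := hLip 0 (fun i => by simp) (WithLp.toLp 2 fun _ => 1) (fun i => by simp)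
  rw [norm_sub_zero_one_eq_sqrt_card] at hcorners
  have hdiam := norm_sub_le_sqrt_card_of_mem_unitCube hx hy
  rcases le_or_gt 0 L with hL | hL
  · exact mul_le_mul_of_nonneg_left hdiam hL
  · have hcard : √(Fintype.card ι) = 0 :=
      le_antisymm (nonpos_of_mul_nonneg_right ((abs_nonneg _).trans hcorners) hL)
        (Real.sqrt_nonneg _)
    rw [hcard] at hdiam ⊢
    rw [le_antisymm hdiam (norm_nonneg _)]

end UnitCube

theorem stmt_0_general (K : ℕ)
    (f g : EuclideanSpace ℝ (Fin K) → ℝ) (Lf G α : ℝ)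
    (cube : Set (EuclideanSpace ℝ (Fin K)))
    (hcube : cube = {x | ∀ i, x i ∈ Set.Icc (0:ℝ) 1})
    (hLip : ∀ x ∈ cube, ∀ y ∈ cube, |f x - f y| ≤ Lf * ‖x - y‖)
    (hfeas : ∃ y ∈ cube, g y ≤ 0)
    (hG : 0 < G)
    (h : EuclideanSpace ℝ (Fin K) → ℝ)
    (hh : ∀ x, h x = f x + G * max 0 (g x))
    (x' : EuclideanSpace ℝ (Fin K)) (hx' : x' ∈ cube)
    (hopt : ∀ x ∈ cube, h x' ≤ h x + α) :
    (∀ x ∈ cube, g x ≤ 0 → f x' ≤ f x + α) ∧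
      g x' ≤ (α + Lf * Real.sqrt K) / G := by
  have hcube' : cube = unitCube (Fin K) := hcube
  subst hcube'
  simp only [hh] at hopt
  refine ⟨fun x hx hgx => le_add_of_penalized_le hG.le (hopt x hx) hgx, ?_⟩
  obtain ⟨y, hy, hgy⟩ := hfeas
  have hfy : f y - f x' ≤ Lf * √K := by
    simpa using (le_abs_self _).trans <|
      (hLip y hy x' hx').trans (mul_norm_sub_le_mul_sqrt_card hLip hy hx')
  exact le_div_of_penalized_le hG (hopt y hy) hgy hfy

/-- Lemma: joint optimization of a composed objective. If `h = f + G·max(0,g)` is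
nearly minimized at `x'` over the cube, then `x'` nearly minimizes `f` over the
feasible set and nearly satisfies the constraint `g`. -/
theorem stmt_0 (K : ℕ) (hK : 0 < K)
    (f g : EuclideanSpace ℝ (Fin K) → ℝ) (Lf G α : ℝ)
    (cube : Set (EuclideanSpace ℝ (Fin K)))
    (hcube : cube = {x | ∀ i, x i ∈ Set.Icc (0:ℝ) 1})
    (hfc : ContinuousOn f cube) (hgc : ContinuousOn g cube)
    (hLip : ∀ x ∈ cube, ∀ y ∈ cube, |f x - f y| ≤ Lf * ‖x - y‖)
    (hfeas : ∃ y ∈ cube, g y ≤ 0)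
    (hG : 0 < G) (hα : 0 < α)
    (h : EuclideanSpace ℝ (Fin K) → ℝ)
    (hh : ∀ x, h x = f x + G * max 0 (g x))
    (x' : EuclideanSpace ℝ (Fin K)) (hx' : x' ∈ cube)
    (hopt : ∀ x ∈ cube, h x' ≤ h x + α) :
    (∀ x ∈ cube, g x ≤ 0 → f x' ≤ f x + α) ∧
      g x' ≤ (α + Lf * Real.sqrt K) / G :=
  stmt_0_general K f g Lf G α cube hcube hLip hfeas hG h hh x' hx' hopt
end

section
/- (Frank–Wolfe with approximate linear oracle, convergence) Let C ⊂ ℝ^K be a compact convex set and h : C → ℝ convex and differentiable with curvature constant C_h. Consider iterates y⁽⁰⁾ ∈ C and, for t ≥ 0 with γ_t = 2/(t+2), any s_t ∈ C satisfying ⟨s_t, ∇h(y⁽ᵗ⁾)⟩ ≤ min_{s ∈ C} ⟨s, ∇h(y⁽ᵗ⁾)⟩ + (1/2)·ρ·γ_t·C_h, and y⁽ᵗ⁺¹⁾ = (1 − γ_t)·y⁽ᵗ⁾ + γ_t·s_t. Then for all t ≥ 1, h(y⁽ᵗ⁾) − min_{y ∈ C} h(y) ≤ (2·C_h/(t+2))·(1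 + ρ). -/
/-!
Convexity gives the gradient inequality `h c ≥ h y + ⟪c - y, ∇h y⟫`. Combined with the curvature
bound along the step and the oracle tolerance, the primal gap `e t = h (y t) - h c` satisfies
`e (t+1) ≤ (1 - γ_t) e t + γ_t² C_h (1 + ρ) / 2`. With `γ_t = 2/(t+2)` this recursion gives
`e t ≤ 2 C_h (1 + ρ)/(t+2)` by induction from `t = 1` (as `γ_0 = 1`, the initial gap plays no
role), the inductive step being `(t+1)/(t+2)² ≤ 1/(t+3)`.
-/

open RealInnerProductSpace

theorem ConvexOn.add_fderiv_sub_le {E : Type*} [NormedAddCommGroup E] [NormedSpace ℝ E]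
    {f : E → ℝ} {f' : E →L[ℝ] ℝ} {s : Set E} {x y : E} (hf : ConvexOn ℝ s f) (hx : x ∈ s)
    (hy : y ∈ s) (hf' : HasFDerivAt f f' x) : f x + f' (y - x) ≤ f y := by
  let φ : ℝ → ℝ := f ∘ AffineMap.lineMap x y
  have hφ : ConvexOn ℝ (Set.Icc 0 1) φ :=
    (hf.comp_affineMap _).subset (fun _ ht => hf.1.lineMap_mem hx hy ht) (convex_Icc 0 1)
  have hφ' : HasDerivAt φ (f' (y - x)) 0 :=
    hf'.comp_hasDerivAt_of_eq 0 AffineMap.hasDerivAt_lineMap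
      (AffineMap.lineMap_apply_zero x y).symm
  have := hφ.le_slope_of_hasDerivAt (by simp) (by simp) zero_lt_one hφ'
  simp only [φ, slope_def_field, Function.comp_apply, AffineMap.lineMap_apply_zero,
    AffineMap.lineMap_apply_one, sub_zero, div_one] at this
  linarith

theorem ConvexOn.add_inner_sub_le_of_hasGradientAt {E : Type*} [NormedAddCommGroup E]
    [InnerProductSpace ℝ E] [CompleteSpace E] {f : E → ℝ} {g : E} {s : Set E} {x y : E}
    (hf : ConvexOn ℝ s f) (hx : x ∈ s) (hy : y ∈ s) (hg : HasGradientAt f g x) :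
    f x + ⟪y - x, g⟫ ≤ f y := by
  simpa [InnerProductSpace.toDual_apply_apply, real_inner_comm] using
    hf.add_fderiv_sub_le hx hy hg.hasFDerivAt

theorem Convex.mem_of_convex_combination_step {E : Type*} [AddCommGroup E] [Module ℝ E]
    {C : Set E} (hC : Convex ℝ C) {y s : ℕ → E} {γ : ℕ → ℝ} (hγ₀ : ∀ t, 0 ≤ γ t)
    (hγ₁ : ∀ t, γ t ≤ 1) (hy₀ : y 0 ∈ C) (hs : ∀ t, s t ∈ C) (hstep : ∀ t, y (t + 1) = (1 - γ t) • y t + γ t • s t) :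
    ∀ t, y t ∈ C
  | 0 => hy₀
  | t + 1 => hstep t ▸ hC (hC.mem_of_convex_combination_step hγ₀ hγ₁ hy₀ hs hstep t) (hs t)
      (sub_nonneg.2 (hγ₁ t)) (hγ₀ t) (sub_add_cancel 1 (γ t))

theorem frankWolfe_step_gap_le {E : Type*} [NormedAddCommGroup E] [InnerProductSpace ℝ E]
    {h : E → ℝ} {x s c g : E} {γ δ Ch : ℝ} (hγ : 0 ≤ γ)
    (hgrad : h x + ⟪c - x, g⟫ ≤ h c)
    (hcurv : h (x + γ • (s - x)) - h x - ⟪(x + γ • (s - x)) - x, g⟫ ≤ γ ^ 2 / 2 * Ch)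
    (horacle : ⟪s, g⟫ ≤ ⟪c, g⟫ + δ) :
    h (x + γ • (s - x)) - h c ≤ (1 - γ) * (h x - h c) + γ * δ + γ ^ 2 / 2 * Ch := by
  rw [add_sub_cancel_left, real_inner_smul_left, inner_sub_left] at hcurv
  rw [inner_sub_left] at hgrad
  nlinarith [mul_le_mul_of_nonneg_left horacle hγ, mul_le_mul_of_nonneg_left hgrad hγ]

theorem le_of_frankWolfe_recursion {e : ℕ → ℝ} {M : ℝ} (hM : 0 ≤ M)
    (he : ∀ t : ℕ, e (t + 1) ≤ (1 - 2 / ((t : ℝ) + 2)) * e t + (2 / ((t : ℝ) + 2)) ^ 2 / 2 * M) :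
    ∀ t, 1 ≤ t → e t ≤ 2 * M / ((t : ℝ) + 2) := by
  refine Nat.le_induction ?_ fun t _ ih => ?_
  · have := he 0
    norm_num at this ⊢
    linarith
  · have ht : (0 : ℝ) ≤ t := t.cast_nonneg
    have hγ : 2 / ((t : ℝ) + 2) ≤ 1 := (div_le_one (by positivity)).2 (by linarith)
    calc e (t + 1) ≤ (1 - 2 / ((t : ℝ) + 2)) * e t + (2 / ((t : ℝ) + 2)) ^ 2 / 2 * M := he t
      _ ≤ (1 - 2 / ((t : ℝ) + 2)) * (2 * M / ((t : ℝ) + 2))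
          + (2 / ((t : ℝ) + 2)) ^ 2 / 2 * M := by
          gcongr
      _ = 2 * M * (((t : ℝ) + 1) / ((t : ℝ) + 2) ^ 2) := by field_simp; ring
      _ ≤ 2 * M * (1 / ((t : ℝ) + 3)) := by
          refine mul_le_mul_of_nonneg_left ?_ (by positivity)
          rw [div_le_div_iff₀ (by positivity) (by positivity)]
          nlinarith
      _ = 2 * M / ((t + 1 : ℕ) + 2) := by push_cast; ring

theorem stmt_8_general (K : ℕ)
    (C : Set (EuclideanSpace ℝ (Fin K)))
    (hCv : Convex ℝ C)
    (h : EuclideanSpace ℝ (Fin K) → ℝ)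
    (h' : EuclideanSpace ℝ (Fin K) → EuclideanSpace ℝ (Fin K))
    (hconv : ConvexOn ℝ Set.univ h)
    (hgrad : ∀ x, HasGradientAt h (h' x) x)
    (Ch ρ : ℝ) (hCh : 0 ≤ Ch) (hρ : 0 ≤ ρ)
    -- `Ch` is (an upper bound on) the curvature constant of `h` over `C`
    (hcurv : ∀ x ∈ C, ∀ s ∈ C, ∀ γ ∈ Set.Ioc (0:ℝ) 1,
      h (x + γ • (s - x)) - h x - ⟪(x + γ • (s - x)) - x, h' x⟫ ≤
        γ ^ 2 / 2 * Ch)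
    (y s : ℕ → EuclideanSpace ℝ (Fin K))
    (hy0 : y 0 ∈ C)
    (hsC : ∀ t, s t ∈ C)
    -- approximate linear oracle with tolerance `(1/2)·ρ·γ_t·C_h`
    (horacle : ∀ t, ∀ c ∈ C,
      ⟪s t, h' (y t)⟫ ≤ ⟪c, h' (y t)⟫ + (1 / 2) * ρ * (2 / ((t : ℝ) + 2)) * Ch)
    (hstep : ∀ t, y (t + 1) =
      (1 - 2 / ((t : ℝ) + 2)) • y t + (2 / ((t : ℝ) + 2)) • s t) :
    ∀ t : ℕ, 1 ≤ t → ∀ c ∈ C,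
      h (y t) - h c ≤ (2 * Ch / ((t : ℝ) + 2)) * (1 + ρ) := by
  have hγ₀ (t : ℕ) : 0 < 2 / ((t : ℝ) + 2) := by positivity
  have hγ₁ (t : ℕ) : 2 / ((t : ℝ) + 2) ≤ 1 :=
    (div_le_one (by positivity)).2 (by linarith [t.cast_nonneg (α := ℝ)])
  have hyC := hCv.mem_of_convex_combination_step (fun t => (hγ₀ t).le) hγ₁ hy0 hsC hstep
  intro t ht c hc
  have hrec (t : ℕ) : h (y (t + 1)) - h c ≤ (1 - 2 / ((t : ℝ) + 2)) * (h (y t) - h c) +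
      (2 / ((t : ℝ) + 2)) ^ 2 / 2 * (Ch * (1 + ρ)) := by
    have hy : y (t + 1) = y t + (2 / ((t : ℝ) + 2)) • (s t - y t) := by
      rw [hstep]; module
    rw [hy]
    refine (frankWolfe_step_gap_le (hγ₀ t).le
      (hconv.add_inner_sub_le_of_hasGradientAt trivial trivial (hgrad (y t)))
      (hcurv _ (hyC t) _ (hsC t) _ ⟨hγ₀ t, hγ₁ t⟩) (horacle t c hc)).trans_eq ?_
    ring
  exact (le_of_frankWolfe_recursion (e := fun t => h (y t) - h c) (M := Ch * (1 + ρ))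
    (by positivity) hrec t ht).trans_eq (by ring)

/-- Frank–Wolfe with an approximate linear oracle: primal convergence
`h(y⁽ᵗ⁾) − min_C h ≤ (2·C_h/(t+2))·(1+ρ)` for all `t ≥ 1`. -/
theorem stmt_8 (K : ℕ) (hK : 0 < K)
    (C : Set (EuclideanSpace ℝ (Fin K)))
    (hCc : IsCompact C) (hCv : Convex ℝ C) (hCne : C.Nonempty)
    (h : EuclideanSpace ℝ (Fin K) → ℝ)
    (h' : EuclideanSpace ℝ (Fin K) → EuclideanSpace ℝ (Fin K))
    (hconv : ConvexOn ℝ Set.univ h)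
    (hgrad : ∀ x, HasGradientAt h (h' x) x)
    (Ch ρ : ℝ) (hCh : 0 ≤ Ch) (hρ : 0 ≤ ρ)
    -- `Ch` is (an upper bound on) the curvature constant of `h` over `C`
    (hcurv : ∀ x ∈ C, ∀ s ∈ C, ∀ γ ∈ Set.Ioc (0:ℝ) 1,
      h (x + γ • (s - x)) - h x - ⟪(x + γ • (s - x)) - x, h' x⟫ ≤
        γ ^ 2 / 2 * Ch)
    (y s : ℕ → EuclideanSpace ℝ (Fin K))
    (hy0 : y 0 ∈ C)
    (hsC : ∀ t, s t ∈ C)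
    -- approximate linear oracle with tolerance `(1/2)·ρ·γ_t·C_h`
    (horacle : ∀ t, ∀ c ∈ C,
      ⟪s t, h' (y t)⟫ ≤ ⟪c, h' (y t)⟫ + (1 / 2) * ρ * (2 / ((t : ℝ) + 2)) * Ch)
    (hstep : ∀ t, y (t + 1) =
      (1 - 2 / ((t : ℝ) + 2)) • y t + (2 / ((t : ℝ) + 2)) • s t) :
    ∀ t : ℕ, 1 ≤ t → ∀ c ∈ C,
      h (y t) - h c ≤ (2 * Ch / ((t : ℝ) + 2)) * (1 + ρ) :=
  stmt_8_general K C hCv h h' hconv hgrad Ch ρ hCh hρ hcurv y s hy0 hsC horacle hstep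
end

section
/- Let C be a nonempty finite set, ε > 0, and h : C → ℝ a score function. Let M be the exponential mechanism that outputs c ∈ C with probability proportional to exp(−ε·h(c)/(2Δ)). If h' : C → ℝ satisfies |h(c) − h'(c)| ≤ Δ for all c ∈ C, and M' is the corresponding mechanism for h', then for every c ∈ C, P[M = c] ≤ e^{ε}·P[M' = c]. -/
open Finset

theorem div_sum_le_mul_mul_div_sum {ι : Type*} [Fintype ι] {w w' : ι → ℝ} {K : ℝ}
    (hw : ∀ i, 0 < w i) (hw' : ∀ i, 0 < w' i)
    (hK : ∀ i, w i ≤ K * w' i) (hK' : ∀ i, w' i ≤ K * w i) (c : ι) :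
    w c / ∑ i, w i ≤ K * K * (w' c / ∑ i, w' i) := by
  have hS : 0 < ∑ i, w i := sum_pos (fun i _ => hw i) ⟨c, mem_univ c⟩
  have hS' : 0 < ∑ i, w' i := sum_pos (fun i _ => hw' i) ⟨c, mem_univ c⟩
  have hK_pos : 0 < K := pos_of_mul_pos_left ((hw c).trans_le (hK c)) (hw' c).le
  have hsum : (∑ i, w' i) / K ≤ ∑ i, w i := by
    rw [div_le_iff₀' hK_pos, mul_sum]
    exact sum_le_sum fun i _ => hK' i
  calc w c / ∑ i, w i ≤ K * w' c / ∑ i, w i := by gcongr; exact hK c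
    _ ≤ K * w' c / ((∑ i, w' i) / K) := by
      gcongr
      exact (mul_pos hK_pos (hw' c)).le
    _ = K * K * (w' c / ∑ i, w' i) := by field_simp

theorem exp_neg_mul_div_le_exp_half_mul {ε Δ a b : ℝ} (hε : 0 ≤ ε) (hΔ : 0 < Δ)
    (hab : b - a ≤ Δ) :
    Real.exp (-ε * a / (2 * Δ)) ≤ Real.exp (ε / 2) * Real.exp (-ε * b / (2 * Δ)) := by
  rw [← Real.exp_add, Real.exp_le_exp, div_le_iff₀ (by positivity)]
  have : ε * b ≤ ε * Δ + ε * a := by nlinarith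
  field_simp
  linarith

theorem stmt_12_general (C : Type*) [Fintype C]
    (ε Δ : ℝ) (hε : 0 < ε) (hΔ : 0 < Δ)
    (h h' : C → ℝ)
    (hsens : ∀ c : C, |h c - h' c| ≤ Δ)
    (p p' : C → ℝ)
    (hp : ∀ c, p c = Real.exp (-ε * h c / (2 * Δ)) /
      ∑ c' : C, Real.exp (-ε * h c' / (2 * Δ)))
    (hp' : ∀ c, p' c = Real.exp (-ε * h' c / (2 * Δ)) /
      ∑ c' : C, Real.exp (-ε * h' c' / (2 * Δ))) :
    ∀ c : C, p c ≤ Real.exp ε * p' c := by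
  intro c
  have hexp : Real.exp ε = Real.exp (ε / 2) * Real.exp (ε / 2) := by
    rw [← Real.exp_add, add_halves]
  rw [hp, hp', hexp]
  exact div_sum_le_mul_mul_div_sum (fun _ => Real.exp_pos _) (fun _ => Real.exp_pos _)
    (fun i => exp_neg_mul_div_le_exp_half_mul hε.le hΔ (abs_sub_le_iff.1 (hsens i)).2)
    (fun i => exp_neg_mul_div_le_exp_half_mul hε.le hΔ (abs_sub_le_iff.1 (hsens i)).1) c

/-- Privacy of the exponential mechanism: if scores `h` and `h'` differ
pointwise by at most `Δ`, the output distributions are within an `e^ε`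
multiplicative factor. -/
theorem stmt_12 (C : Type*) [Fintype C] [Nonempty C]
    (ε Δ : ℝ) (hε : 0 < ε) (hΔ : 0 < Δ)
    (h h' : C → ℝ)
    (hsens : ∀ c : C, |h c - h' c| ≤ Δ)
    (p p' : C → ℝ)
    (hp : ∀ c, p c = Real.exp (-ε * h c / (2 * Δ)) /
      ∑ c' : C, Real.exp (-ε * h c' / (2 * Δ)))
    (hp' : ∀ c, p' c = Real.exp (-ε * h' c / (2 * Δ)) /
      ∑ c' : C, Real.exp (-ε * h' c' / (2 * Δ))) :
    ∀ c : C, p c ≤ Real.exp ε * p' c :=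
  stmt_12_general C ε Δ hε hΔ h h' hsens p p' hp hp'
end

section
/- Let C be a nonempty finite set, ε > 0, ρ ∈ (0,1), and h : C → ℝ with sensitivity proxy Δ > 0. Let c̃ be sampled with probability proportional to exp(−ε·h(c)/(2Δ)) and let c* minimize h over C. Then with probability at least 1 − ρ, h(c̃) − h(c*) ≤ (2Δ/ε)·log(|C|/ρ). -/
/-!
The normalising sum is at least the weight `exp (-β h c*)` of a single point, so every `c` with
`h c - h c* > t` has probability at most `exp (-β t)`. There are at most `|C|` such points, and
`t = β⁻¹ log (|C| / ρ)` makes `|C| exp (-β t) = ρ`.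
-/

open Finset Real

/-- The exponential mechanism with privacy parameter `ε` and sensitivity `Δ` is `gibbs (ε / (2Δ))`. -/
noncomputable def gibbs {ι : Type*} [Fintype ι] (β : ℝ) (h : ι → ℝ) (i : ι) : ℝ :=
  exp (-β * h i) / ∑ j, exp (-β * h j)

section Gibbs

variable {ι : Type*} [Fintype ι]

theorem gibbs_le_exp_neg_mul_sub (β : ℝ) (h : ι → ℝ) (i j : ι) :
    gibbs β h i ≤ exp (-β * (h i - h j)) := by
  have hZ : exp (-β * h j) ≤ ∑ k, exp (-β * h k) :=
    single_le_sum (f := fun k => exp (-β * h k)) (fun k _ => (exp_pos _).le) (mem_univ j)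
  calc gibbs β h i ≤ exp (-β * h i) / exp (-β * h j) :=
        div_le_div_of_nonneg_left (exp_pos _).le (exp_pos _) hZ
    _ = exp (-β * (h i - h j)) := by rw [← exp_sub]; ring_nf

theorem sum_gibbs_filter_lt_sub_le {β : ℝ} (hβ : 0 ≤ β) (h : ι → ℝ) (j : ι) (t : ℝ) :
    ∑ i ∈ univ.filter (fun i => t < h i - h j), gibbs β h i ≤
      Fintype.card ι * exp (-β * t) := by
  have hterm : ∀ i ∈ univ.filter (fun i => t < h i - h j), gibbs β h i ≤ exp (-β * t) := by
    intro i hi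
    refine (gibbs_le_exp_neg_mul_sub β h i j).trans (exp_le_exp.mpr ?_)
    nlinarith [(mem_filter.mp hi).2]
  calc ∑ i ∈ univ.filter (fun i => t < h i - h j), gibbs β h i
      ≤ #(univ.filter (fun i => t < h i - h j)) * exp (-β * t) := by
        simpa using sum_le_card_nsmul _ _ _ hterm
    _ ≤ Fintype.card ι * exp (-β * t) := by
        gcongr
        exact_mod_cast card_filter_le _ _

theorem sum_gibbs_filter_lt_sub_le_of_log {β ρ : ℝ} (hβ : 0 < β) (hρ : 0 < ρ) (h : ι → ℝ)
    (j : ι) :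
    ∑ i ∈ univ.filter (fun i => β⁻¹ * log (Fintype.card ι / ρ) < h i - h j), gibbs β h i ≤ ρ := by
  have hN : (0 : ℝ) < Fintype.card ι := by
    have : Nonempty ι := ⟨j⟩
    exact_mod_cast Fintype.card_pos
  have hexp : exp (-β * (β⁻¹ * log (Fintype.card ι / ρ))) = ρ / Fintype.card ι := by
    rw [neg_mul, ← mul_assoc, mul_inv_cancel₀ hβ.ne', one_mul, exp_neg,
      exp_log (div_pos hN hρ), inv_div]
  calc _ ≤ Fintype.card ι * exp (-β * (β⁻¹ * log (Fintype.card ι / ρ))) :=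
        sum_gibbs_filter_lt_sub_le hβ.le h j _
    _ = ρ := by rw [hexp]; field_simp

end Gibbs

theorem stmt_13_general (C : Type*) [Fintype C]
    (ε Δ ρ : ℝ) (hε : 0 < ε) (hΔ : 0 < Δ) (hρ : ρ ∈ Set.Ioo (0:ℝ) 1)
    (h : C → ℝ)
    (p : C → ℝ)
    (hp : ∀ c, p c = Real.exp (-ε * h c / (2 * Δ)) /
      ∑ c' : C, Real.exp (-ε * h c' / (2 * Δ)))
    (cstar : C) :
    ∑ c ∈ Finset.univ.filter
        (fun c : C => (2 * Δ / ε) * Real.log ((Fintype.card C : ℝ) / ρ) <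
          h c - h cstar),
      p c ≤ ρ := by
  have hp_gibbs : p = gibbs (ε / (2 * Δ)) h := by
    funext c
    simp only [hp, gibbs, neg_mul, neg_div, mul_div_right_comm]
  rw [hp_gibbs, ← inv_div]
  exact sum_gibbs_filter_lt_sub_le_of_log (by positivity) hρ.1 h cstar

/-- Utility of the exponential mechanism: the probability that the sampled
score exceeds the optimum by more than `(2Δ/ε)·log(|C|/ρ)` is at most `ρ`. -/
theorem stmt_13 (C : Type*) [Fintype C] [Nonempty C]
    (ε Δ ρ : ℝ) (hε : 0 < ε) (hΔ : 0 < Δ) (hρ : ρ ∈ Set.Ioo (0:ℝ) 1)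
    (h : C → ℝ)
    (p : C → ℝ)
    (hp : ∀ c, p c = Real.exp (-ε * h c / (2 * Δ)) /
      ∑ c' : C, Real.exp (-ε * h c' / (2 * Δ)))
    (cstar : C) (hcstar : ∀ c : C, h cstar ≤ h c) :
    ∑ c ∈ Finset.univ.filter
        (fun c : C => (2 * Δ / ε) * Real.log ((Fintype.card C : ℝ) / ρ) <
          h c - h cstar),
      p c ≤ ρ :=
  stmt_13_general C ε Δ ρ hε hΔ hρ h p hp cstar
end
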